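/- Let ĥm, ĥu, ĥq : ℝ² → ℝ be C¹ and suppose they satisfy the system (ĥm⁻¹)_t = 2ĥq, ĥm = ĥu − (ĥq)_y · ĥm + 1, ĥq = ĥu_y · ĥm, with ĥm > 0. Define ĥω := ĥu² − ĥq² + 2ĥu. Then (ĥm⁻¹)_t = (ĥω)_y. -/

import Mathlib

/-- The mCH system in the (y,t) variables implies the conservation form
(1/m̂)_t = ω̂_y, where ω̂ = û² - q̂² + 2û. -/
theorem stmt_10 (m u q : ℝ → ℝ → ℝ)
    (hm_pos : ∀ y t : ℝ, 0 < m y t)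
    (hu : ∀ y t : ℝ, DifferentiableAt ℝ (fun y' => u y' t) y)
    (hq : ∀ y t : ℝ, DifferentiableAt ℝ (fun y' => q y' t) y)
    (heq1 : ∀ y t : ℝ, HasDerivAt (fun t' => (m y t')⁻¹) (2 * q y t) t)
    (heq2 : ∀ y t : ℝ, m y t = u y t - (deriv (fun y' => q y' t) y) * m y t + 1)
    (heq3 : ∀ y t : ℝ, q y t = (deriv (fun y' => u y' t) y) * m y t) :
    ∀ y t : ℝ, HasDerivAt (fun t' => (m y t')⁻¹)
      (deriv (fun y' => (u y' t)^2 - (q y' t)^2 + 2 * u y' t) y) t := by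
  intro y t
  have hud := hu y t
  have hqd := hq y t
  have hdu := hud.hasDerivAt
  have hdq := hqd.hasDerivAt
  set uy := deriv (fun y' => u y' t) y
  set qy := deriv (fun y' => q y' t) y
  have hω : HasDerivAt (fun y' => (u y' t)^2 - (q y' t)^2 + 2 * u y' t)
      (2 * u y t * uy - 2 * q y t * qy + 2 * uy) y := by
    have h1 := ((hdu.fun_pow 2).fun_sub (hdq.fun_pow 2)).fun_add (hdu.const_mul 2)
    refine h1.congr_deriv ?_
    ring
  have hωy : deriv (fun y' => (u y' t)^2 - (q y' t)^2 + 2 * u y' t) y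
      = 2 * u y t * uy - 2 * q y t * qy + 2 * uy := hω.deriv
  rw [hωy]
  have key : 2 * u y t * uy - 2 * q y t * qy + 2 * uy = 2 * q y t := by
    have hm := (hm_pos y t).ne'
    have e2 := heq2 y t
    have e3 := heq3 y t
    have hqym : qy * m y t = u y t + 1 - m y t := by linarith
    have : (2 * u y t * uy - 2 * q y t * qy + 2 * uy) * m y t = 2 * q y t * m y t := by
      have : 2 * (u y t + 1) * (uy * m y t) - 2 * q y t * (qy * m y t)
          = 2 * q y t * m y t := by
        rw [← e3, hqym]; ring
      nlinarith [this]
    exact mul_right_cancel₀ hm this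
  rw [key]
  exact heq1 y t
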